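/- Let K be a field and let Δ be a finite nonempty set of (pairwise distinct) normalized discrete valuations v : K^× ↠ ℤ on K, with valuation rings O_v = {x ∈ K : v(x) ≥ 0}. Let R = ⋂_{v ∈ Δ} O_v and J(R) = {x ∈ K : v(x) ≥ 1 for all v ∈ Δ} (the Jacobson radical of R), and set R̃ = {x ∈ K : there is no y ∈ J(R) with x·y = 1}. Then: (i) R̃ = ⋃_{v ∈ Δ} O_v; and (ii) if J(R) is diophantine over K, then the complement K \ R̃ is diophantine over K (so R̃ is defined by a universal formula in K). -/

import Mathlib

/-- A set `A ⊆ K^m` is diophantine over a field `K`: there are `n ∈ ℕ` and a polynomial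
`g ∈ K[x₁,…,x_m,y₁,…,y_n]` such that `a ∈ A` iff `g(a,r) = 0` for some `r ∈ K^n`. -/
def IsDiophantine {K : Type*} [Field K] {m : ℕ} (A : Set (Fin m → K)) : Prop :=
  ∃ (n : ℕ) (g : MvPolynomial (Fin m ⊕ Fin n) K),
    ∀ a : Fin m → K, a ∈ A ↔ ∃ r : Fin n → K, MvPolynomial.eval (Sum.elim a r) g = 0

/-- A normalized discrete valuation on a field `K`, encoded multiplicatively as a valuation
with values in `ℤₘ₀ = WithZero (Multiplicative ℤ)` which is surjective (i.e. `v : K^× ↠ ℤ` is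
onto).  For `x ≠ 0`, the additive valuation of `x` is `n ∈ ℤ` iff `val x = ofAdd (-n)`; in
particular `v(x) ≥ n` iff `val x ≤ ofAdd (-n)`. -/
structure NormDiscValuation (K : Type*) [Field K] where
  val : Valuation K (WithZero (Multiplicative ℤ))
  surjective : Function.Surjective val

/-- `v(x) ≥ 1`, i.e. `x` lies in the maximal ideal of the valuation ring of `v`. -/
def NormDiscValuation.InMaxIdeal {K : Type*} [Field K] (v : NormDiscValuation K) (x : K) :
    Prop :=
  v.val x ≤ ((Multiplicative.ofAdd (-1 : ℤ) : Multiplicative ℤ) : WithZero (Multiplicative ℤ))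

/-! Part (i) is a pointwise statement about inverses: `x = y⁻¹` with `v y < 1` for all `v ∈ Δ`
exactly when `v x > 1` for all `v ∈ Δ`.  For part (ii), a uniformizer `c` of any `v ∈ Δ` has odd
valuation, so it is not a square and `u² = c w²` forces `u = w = 0`; this merges the two equations
`g(y, r) = 0` and `x y - 1 = 0` into the single equation `g(y, r)² - c (x y - 1)² = 0`. -/

open WithZero MvPolynomial

theorem WithZero.not_isSquare_exp_of_odd {n : ℤ} (hn : Odd n) : ¬IsSquare (exp n : ℤᵐ⁰) := by
  rintro ⟨a, ha⟩
  have ha0 : a ≠ 0 := by rintro rfl; simp at ha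
  have := congrArg log ha
  rw [log_exp, log_mul ha0 ha0] at this
  exact Int.not_even_iff_odd.mpr hn ⟨_, this⟩

theorem WithZero.lt_one_iff_le_exp_neg_one {x : ℤᵐ⁰} : x < 1 ↔ x ≤ exp (-1) := by
  rw [← lt_mul_exp_iff_le exp_ne_zero, ← exp_add, neg_add_cancel, exp_zero]

theorem Valuation.exists_mul_eq_one_forall_lt_one_iff {K ι Γ₀ : Type*} [Field K]
    [LinearOrderedCommGroupWithZero Γ₀] (v : ι → Valuation K Γ₀) {s : Set ι} (hs : s.Nonempty)
    (x : K) : (∃ y, (∀ i ∈ s, v i y < 1) ∧ x * y = 1) ↔ ∀ i ∈ s, 1 < v i x := by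
  constructor
  · rintro ⟨y, hy, hxy⟩ i hi
    have hx : x ≠ 0 := left_ne_zero_of_mul_eq_one hxy
    rw [(v i).one_lt_val_iff hx, ← eq_inv_of_mul_eq_one_right hxy]
    exact hy i hi
  · intro h
    have hx : x ≠ 0 := by
      obtain ⟨i, hi⟩ := hs
      intro hx0
      simpa [hx0] using h i hi
    exact ⟨x⁻¹, fun i hi => ((v i).one_lt_val_iff hx).mp (h i hi), mul_inv_cancel₀ hx⟩

theorem sq_eq_mul_sq_iff_of_not_isSquare {K : Type*} [Field K] {c : K} (hc : ¬IsSquare c)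
    {u w : K} : u ^ 2 = c * w ^ 2 ↔ u = 0 ∧ w = 0 := by
  refine ⟨fun h => ?_, fun ⟨hu, hw⟩ => by simp [hu, hw]⟩
  have hw : w = 0 := by
    by_contra hw
    exact hc ⟨u / w, by field_simp; linear_combination -h⟩
  subst hw
  simpa using h

theorem MvPolynomial.eval_sq_sub_C_mul_sq_eq_zero_iff {K σ : Type*} [Field K] {c : K}
    (hc : ¬IsSquare c) (x : σ → K) (p q : MvPolynomial σ K) :
    eval x (p ^ 2 - C c * q ^ 2) = 0 ↔ eval x p = 0 ∧ eval x q = 0 := by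
  simp only [map_sub, map_mul, map_pow, eval_C, sub_eq_zero]
  exact sq_eq_mul_sq_iff_of_not_isSquare hc

namespace NormDiscValuation

variable {K : Type*} [Field K]

theorem inMaxIdeal_iff (v : NormDiscValuation K) (x : K) : v.InMaxIdeal x ↔ v.val x < 1 :=
  lt_one_iff_le_exp_neg_one.symm

theorem exists_not_isSquare (v : NormDiscValuation K) : ∃ c : K, ¬IsSquare c := by
  obtain ⟨c, hc⟩ := v.surjective (exp (-1))
  exact ⟨c, fun hsq => not_isSquare_exp_of_odd odd_neg_one (hc ▸ hsq.map v.val)⟩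

end NormDiscValuation

theorem IsDiophantine.setOf_exists_mem_mul_eq_one {K : Type*} [Field K] {c : K}
    (hc : ¬IsSquare c) {S : Set (Fin 1 → K)} (hS : IsDiophantine S) :
    IsDiophantine {f : Fin 1 → K | ∃ y : K, (fun _ => y) ∈ S ∧ f 0 * y = 1} := by
  obtain ⟨n, g, hg⟩ := hS
  -- the coordinate of `g` becomes the new first witness `y`, freeing `inl 0` for `x`
  let σ : Fin 1 ⊕ Fin n → Fin 1 ⊕ Fin (n + 1) :=
    Sum.elim (fun _ => .inr 0) (fun i => .inr i.succ)
  have eval_rename_σ (a : Fin 1 → K) (y : K) (r : Fin n → K) :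
      eval (Sum.elim a (Fin.cons y r)) (rename σ g) = eval (Sum.elim (fun _ => y) r) g := by
    rw [eval_rename]
    congr 2
    funext s
    rcases s with _ | _ <;> simp [σ]
  refine ⟨n + 1, rename σ g ^ 2 - C c * (X (.inl 0) * X (.inr 0) - 1) ^ 2, fun a => ?_⟩
  simp only [Fin.exists_fin_succ_pi, eval_sq_sub_C_mul_sq_eq_zero_iff hc, eval_rename_σ]
  simp [hg, sub_eq_zero]

theorem tilde_ring_eq_union_and_compl_isDiophantine_general (K : Type*) [Field K]
    (Δ : Set (NormDiscValuation K)) (hne : Δ.Nonempty) :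
    ({x : K | ¬∃ y : K, (∀ v ∈ Δ, v.InMaxIdeal y) ∧ x * y = 1}
        = ⋃ v ∈ Δ, {x : K | v.val x ≤ 1}) ∧
    (IsDiophantine {f : Fin 1 → K | ∀ v ∈ Δ, v.InMaxIdeal (f 0)} →
      IsDiophantine {f : Fin 1 → K |
        ∃ y : K, (∀ v ∈ Δ, v.InMaxIdeal y) ∧ f 0 * y = 1}) := by
  refine ⟨?_, fun hJ => ?_⟩
  · ext x
    simp [NormDiscValuation.inMaxIdeal_iff,
      Valuation.exists_mul_eq_one_forall_lt_one_iff NormDiscValuation.val hne]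
  · obtain ⟨c, hc⟩ := hne.some.exists_not_isSquare
    exact hJ.setOf_exists_mem_mul_eq_one hc

/-- **Lemma.** Let `K` be a field and `Δ` a finite nonempty set of normalized discrete
valuations on `K`, with valuation rings `O_v = {x : v(x) ≥ 0}`.  Let `R = ⋂_{v ∈ Δ} O_v`,
`J(R) = {x : v(x) ≥ 1 for all v ∈ Δ}` its Jacobson radical, and
`R̃ = {x ∈ K : there is no y ∈ J(R) with x·y = 1}`.  Then (i) `R̃ = ⋃_{v ∈ Δ} O_v`, and
(ii) if `J(R)` is diophantine over `K` then `K \ R̃ = {x : ∃ y ∈ J(R), x·y = 1}` is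
diophantine over `K` (so `R̃` is defined by a universal formula in `K`). -/
theorem tilde_ring_eq_union_and_compl_isDiophantine (K : Type*) [Field K]
    (Δ : Set (NormDiscValuation K)) (hfin : Δ.Finite) (hne : Δ.Nonempty) :
    ({x : K | ¬∃ y : K, (∀ v ∈ Δ, v.InMaxIdeal y) ∧ x * y = 1}
        = ⋃ v ∈ Δ, {x : K | v.val x ≤ 1}) ∧
    (IsDiophantine {f : Fin 1 → K | ∀ v ∈ Δ, v.InMaxIdeal (f 0)} →
      IsDiophantine {f : Fin 1 → K |
        ∃ y : K, (∀ v ∈ Δ, v.InMaxIdeal y) ∧ f 0 * y = 1}) :=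
  tilde_ring_eq_union_and_compl_isDiophantine_general K Δ hne
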